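/- Let G and H be non-trivial groups and let H act faithfully on a set X. If G and H are both finitely invariably generated, then G ≀_X H is invariably generated, and G ≀_X H is finitely invariably generated if and only if it is finitely generated. In particular, if G and H are finitely invariably generated then the regular wreath product G ≀ H is finitely invariably generated. -/

import Mathlib

/-!
Invariable generators of `G ≀_X H`: those of `H`, together with those of `G` placed in one
coordinate `z` of each `H`-orbit. Given arbitrary conjugates of them, the subgroup `C` they
generate maps onto `H`. Conjugating `g^{(y)}` by `w` gives a conjugate of `g` in coordinate
`w⁻¹ • y`, and conjugating once more by an element of `C` over a suitable element of `H` brings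
it back to coordinate `z`; so `C ∩ G_z` contains a conjugate of every generator of `G`, hence
is `G_z`, and transporting again gives every coordinate subgroup. Thus `C` contains the base
and is everything. A finitely generated `G ≀_X H` has finitely many orbits, since elements
supported in the orbits met by the generators form a subgroup; the regular action is
transitive.
-/

open Function SemidirectProduct

/-- A subset `S` invariably generates `K` if replacing each element of `S` by an
arbitrary conjugate always yields a generating set of `K`. -/
def InvariablyGenerates (K : Type*) [Group K] (S : Set K) : Prop :=
  ∀ a : K → K, Subgroup.closure ((fun s => (a s)⁻¹ * s * a s) '' S) = ⊤

/-- `K` is invariably generated if `K` invariably generates itself. -/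
def IsIG (K : Type*) [Group K] : Prop :=
  InvariablyGenerates K Set.univ

/-- `K` is finitely invariably generated if some finite subset invariably generates it. -/
def IsFIG (K : Type*) [Group K] : Prop :=
  ∃ S : Set K, S.Finite ∧ InvariablyGenerates K S

/-- The base of the wreath product `G ≀_X H`: the restricted direct product
`⨁_{x ∈ X} G`, realized as the finitely supported functions `X → G`. -/
def WreathBase (G X : Type*) [Group G] : Subgroup (X → G) where
  carrier := {f | (mulSupport f).Finite}
  one_mem' := by simp
  mul_mem' {f g} hf hg := (Set.Finite.union hf hg).subset (mulSupport_mul f g)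
  inv_mem' {f} hf := by simpa using hf

lemma mem_wreathBase {G X : Type*} [Group G] {f : X → G} :
    f ∈ WreathBase G X ↔ (mulSupport f).Finite := Iff.rfl

/-- The permutation action of `H` on the base, `(h • f) x = f (h⁻¹ • x)`, so that in the
wreath product conjugation by `h` (i.e. `h · g^{(x)} · h⁻¹`) sends the coordinate subgroup
`G_x` to `G_{h • x}`; equivalently `h⁻¹ · g^{(x)} · h = g^{(h⁻¹ • x)}`, which is the
left-action rendering of "conjugation multiplies indices on the right". -/
def wreathAut (G H X : Type*) [Group G] [Group H] [MulAction H X] :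
    H →* MulAut (WreathBase G X) where
  toFun h :=
    { toFun := fun f => ⟨fun x => (f : X → G) (h⁻¹ • x),
        mem_wreathBase.mpr (((mem_wreathBase.mp f.2).image (h • ·)).subset
          fun x hx => ⟨h⁻¹ • x, hx, by simp⟩)⟩
      invFun := fun f => ⟨fun x => (f : X → G) (h • x),
        mem_wreathBase.mpr (((mem_wreathBase.mp f.2).image (h⁻¹ • ·)).subset
          fun x hx => ⟨h • x, hx, by simp⟩)⟩
      left_inv := fun f => Subtype.ext (funext fun x => by simp)
      right_inv := fun f => Subtype.ext (funext fun x => by simp)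
      map_mul' := fun f g => Subtype.ext (funext fun x => by simp) }
  map_one' := by
    ext f x
    simp
  map_mul' h₁ h₂ := by
    ext f x
    simp [mul_smul]

/-- The restricted wreath product `G ≀_X H`. -/
abbrev WreathProduct (G H X : Type*) [Group G] [Group H] [MulAction H X] :=
  WreathBase G X ⋊[wreathAut G H X] H

open scoped Classical in
/-- `g^{(y)}`: the element of the base which is `g` in coordinate `y` and trivial elsewhere. -/
noncomputable def WreathBase.single {G : Type*} (X : Type*) [Group G] (y : X) :
    G →* WreathBase G X where
  toFun g := ⟨fun x => if x = y then g else 1,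
    mem_wreathBase.mpr ((Set.finite_singleton y).subset fun x hx => by
      by_contra hxy
      exact hx (if_neg hxy))⟩
  map_one' := Subtype.ext (funext fun x => by simp)
  map_mul' g₁ g₂ := Subtype.ext (funext fun x => by by_cases h : x = y <;> simp [h])

/-- The embedding of `G` onto the coordinate subgroup `G_y` of the wreath product. -/
noncomputable def coordHom (G H : Type*) {X : Type*} [Group G] [Group H] [MulAction H X]
    (y : X) : G →* WreathProduct G H X :=
  SemidirectProduct.inl.comp (WreathBase.single X y)

/-- `H_X` is of torsion-type if there is `y ∈ X` such that for every `x` in the `H`-orbit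
of `y` and every `k ∈ H`, the `⟨k⟩`-orbit of `x` is finite. -/
def IsTorsionType (H X : Type*) [Group H] [MulAction H X] : Prop :=
  ∃ y : X, ∀ x ∈ MulAction.orbit H y, ∀ k : H, (Set.range fun n : ℤ => k ^ n • x).Finite

/-- A `Γ_z`-set: a set of base elements containing, for every `g ∈ G`, an element whose
coordinate at `z` is `g`. -/
def IsGammaSet {G X : Type*} [Group G] (z : X) (Γ : Set (WreathBase G X)) : Prop :=
  ∀ g : G, ∃ f ∈ Γ, (f : X → G) z = g

/-- The action of `H` on the base `⨁_{h ∈ H} G` of the regular wreath product `G ≀ H`,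
given by right multiplication on the index set: `(φ h f) x = f (x * h)`, so that
`h⁻¹ · g^{(x)} · h = g^{(x · h)}`. -/
def regularWreathAut (G H : Type*) [Group G] [Group H] : H →* MulAut (WreathBase G H) where
  toFun h :=
    { toFun := fun f => ⟨fun x => (f : H → G) (x * h),
        mem_wreathBase.mpr (((mem_wreathBase.mp f.2).image (· * h⁻¹)).subset
          fun x hx => ⟨x * h, hx, by simp⟩)⟩
      invFun := fun f => ⟨fun x => (f : H → G) (x * h⁻¹),
        mem_wreathBase.mpr (((mem_wreathBase.mp f.2).image (· * h)).subset
          fun x hx => ⟨x * h⁻¹, hx, by simp⟩)⟩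
      left_inv := fun f => Subtype.ext (funext fun x => by simp)
      right_inv := fun f => Subtype.ext (funext fun x => by simp)
      map_mul' := fun f g => Subtype.ext (funext fun x => by simp) }
  map_one' := by
    ext f x
    simp
  map_mul' h₁ h₂ := by
    ext f x
    simp [mul_assoc]

/-- The regular wreath product `G ≀ H`: the base is `⨁_{h ∈ H} G` and `H` acts by
permuting coordinates via right multiplication on the index set `H`. -/
abbrev RegularWreath (G H : Type*) [Group G] [Group H] :=
  WreathBase G H ⋊[regularWreathAut G H] H

section InvariableGeneration

variable {K : Type*} [Group K] {S T : Set K}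

lemma InvariablyGenerates.mono (h : InvariablyGenerates K S) (hST : S ⊆ T) :
    InvariablyGenerates K T := fun a =>
  top_le_iff.mp ((h a).ge.trans (Subgroup.closure_mono (Set.image_mono hST)))

lemma InvariablyGenerates.closure_eq_top (h : InvariablyGenerates K S) :
    Subgroup.closure S = ⊤ := by
  simpa using h fun _ => 1

lemma InvariablyGenerates.eq_top_of_forall_conj_mem (h : InvariablyGenerates K S)
    {C : Subgroup K} (hC : ∀ s ∈ S, ∃ t, t⁻¹ * s * t ∈ C) : C = ⊤ := by
  classical
  choose t ht using hC
  rw [eq_top_iff, ← h fun s => if hs : s ∈ S then t s hs else 1, Subgroup.closure_le]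
  rintro _ ⟨s, hs, rfl⟩
  simpa [dif_pos hs] using ht s hs

lemma IsFIG.isIG (h : IsFIG K) : IsIG K :=
  let ⟨_, _, hS⟩ := h
  hS.mono (Set.subset_univ _)

lemma IsFIG.fg (h : IsFIG K) : Group.FG K :=
  let ⟨S, hfin, hS⟩ := h
  Group.fg_iff.mpr ⟨S, hS.closure_eq_top, hfin⟩

end InvariableGeneration

lemma Subgroup.eq_top_of_ker_le_of_map_eq_top {K L : Type*} [Group K] [Group L] {f : K →* L}
    {C : Subgroup K} (hker : f.ker ≤ C) (hmap : C.map f = ⊤) : C = ⊤ := by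
  rw [← sup_eq_left.mpr hker, ← Subgroup.comap_map_eq, hmap, Subgroup.comap_top]

namespace SemidirectProduct

variable {N K : Type*} [Group N] [Group K] {φ : K →* MulAut N}

lemma inv_mul_inl_mul (w : N ⋊[φ] K) (n : N) :
    w⁻¹ * inl n * w = inl (φ w.right⁻¹ (w.left⁻¹ * n * w.left)) := by
  ext
  · simp [mul_left, inv_left, left_inl, right_inl, mul_assoc]
  · simp [mul_right, inv_right, right_inl]

end SemidirectProduct

namespace WreathBase

variable {G X : Type*} [Group G]

open scoped Classical in
lemma single_apply (y : X) (g : G) (x : X) :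
    (single X y g : X → G) x = if x = y then g else 1 := rfl

lemma inv_mul_single_mul (b : WreathBase G X) (y : X) (g : G) :
    b⁻¹ * single X y g * b = single X y (((b : X → G) y)⁻¹ * g * (b : X → G) y) := by
  ext x
  by_cases hx : x = y <;> simp [single_apply, hx]

lemma iSup_range_single : ⨆ y : X, (single X y : G →* WreathBase G X).range = ⊤ := by
  classical
  set C := ⨆ y : X, (single X y : G →* WreathBase G X).range
  suffices ∀ s : Finset X, ∀ f : WreathBase G X, mulSupport (f : X → G) ⊆ s → f ∈ C from
    eq_top_iff.mpr fun f _ => this f.2.toFinset f f.2.coe_toFinset.ge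
  intro s
  induction s using Finset.induction_on with
  | empty =>
    intro f hf
    rw [Finset.coe_empty, Set.subset_empty_iff, mulSupport_eq_empty_iff] at hf
    rw [show f = 1 from Subtype.ext hf]
    exact C.one_mem
  | insert b t _ ih =>
    intro f hf
    set f' := (single X b ((f : X → G) b))⁻¹ * f
    have hf' : mulSupport (f' : X → G) ⊆ t := by
      intro x hx
      by_cases hxb : x = b
      · simp [f', single_apply, hxb] at hx
      · have hfx : x ∈ mulSupport (f : X → G) := by simpa [f', single_apply, hxb] using hx
        simpa [hxb] using hf hfx
    rw [← mul_inv_cancel_left (single X b ((f : X → G) b)) f]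
    exact C.mul_mem (Subgroup.mem_iSup_of_mem b ⟨_, rfl⟩) (ih f' hf')

end WreathBase

section WreathProduct

variable {G H X : Type*} [Group G] [Group H] [MulAction H X]

lemma wreathAut_single (h : H) (y : X) (g : G) :
    wreathAut G H X h (WreathBase.single X y g) = WreathBase.single X (h • y) g := by
  classical
  ext x
  exact if_congr inv_smul_eq_iff rfl rfl

lemma inv_mul_coordHom_mul (w : WreathProduct G H X) (y : X) (g : G) :
    w⁻¹ * coordHom G H y g * w
      = coordHom G H (w.right⁻¹ • y) (((w.left : X → G) y)⁻¹ * g * (w.left : X → G) y) := by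
  rw [coordHom, MonoidHom.comp_apply, inv_mul_inl_mul, WreathBase.inv_mul_single_mul,
    wreathAut_single]
  rfl

lemma mulSupport_wreathAut_subset {Y : Set X} (hY : ∀ h : H, ∀ x ∈ Y, h • x ∈ Y) (h : H)
    {f : WreathBase G X} (hf : mulSupport (f : X → G) ⊆ Y) :
    mulSupport (wreathAut G H X h f : X → G) ⊆ Y := fun x hx => by
  simpa using hY h _ (hf hx)

def wreathSupportedIn (Y : Set X) (hY : ∀ h : H, ∀ x ∈ Y, h • x ∈ Y) :
    Subgroup (WreathProduct G H X) where
  carrier := {w | mulSupport (w.left : X → G) ⊆ Y}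
  one_mem' := by simp [one_left]
  mul_mem' {w₁ w₂} h₁ h₂ := (mulSupport_mul _ _).trans
    (Set.union_subset h₁ (mulSupport_wreathAut_subset hY _ h₂))
  inv_mem' {w} hw := mulSupport_wreathAut_subset hY _ (by simpa using hw)

lemma exists_finite_orbit_reps_of_fg [Nontrivial G] (hfg : Group.FG (WreathProduct G H X)) :
    ∃ R : Set X, R.Finite ∧ ∀ x, ∃ r ∈ R, x ∈ MulAction.orbit H r := by
  obtain ⟨T, hT, hTfin⟩ := Group.fg_iff.mp hfg
  set R := ⋃ w ∈ T, mulSupport (w.left : X → G)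
  set Y := ⋃ r ∈ R, MulAction.orbit H r
  have hY : ∀ h : H, ∀ x ∈ Y, h • x ∈ Y := by
    simp only [Y, Set.mem_iUnion]
    rintro h x ⟨r, hr, hx⟩
    exact ⟨r, hr, MulAction.mem_orbit_of_mem_orbit h hx⟩
  have hTY : Subgroup.closure T ≤ wreathSupportedIn (G := G) Y hY :=
    (Subgroup.closure_le _).mpr fun w hw x hx =>
      Set.mem_biUnion (Set.mem_biUnion hw hx) (MulAction.mem_orbit_self x)
  refine ⟨R, hTfin.biUnion fun w _ => w.left.2, fun x => ?_⟩
  obtain ⟨g, hg⟩ := exists_ne (1 : G)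
  have hx : coordHom G H x g ∈ wreathSupportedIn Y hY := hTY (hT ▸ Subgroup.mem_top _)
  simpa [Y] using hx (by simp [coordHom, WreathBase.single_apply, hg])

lemma exists_coordHom_smul_mem {C : Subgroup (WreathProduct G H X)}
    (hC : C.map rightHom = ⊤) (h : H) (y : X) :
    ∃ d : G, ∀ g, coordHom G H y g ∈ C → coordHom G H (h • y) (d⁻¹ * g * d) ∈ C := by
  obtain ⟨c, hc, hcr⟩ : h⁻¹ ∈ C.map rightHom := hC ▸ Subgroup.mem_top _
  refine ⟨(c.left : X → G) y, fun g hg => ?_⟩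
  have := C.mul_mem (C.mul_mem (C.inv_mem hc) hg) hc
  rwa [inv_mul_coordHom_mul, ← rightHom_eq_right, hcr, inv_inv] at this

lemma eq_top_of_coordHom_mem {C : Subgroup (WreathProduct G H X)}
    (hcoord : ∀ x g, coordHom G H x g ∈ C) (hC : C.map rightHom = ⊤) : C = ⊤ := by
  refine Subgroup.eq_top_of_ker_le_of_map_eq_top ?_ hC
  rw [← range_inl_eq_ker_rightHom, MonoidHom.range_eq_map, Subgroup.map_le_iff_le_comap,
    ← WreathBase.iSup_range_single, iSup_le_iff]
  rintro y _ ⟨g, rfl⟩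
  exact hcoord y g

theorem invariablyGenerates_wreathProduct {SG : Set G} {SH : Set H}
    (hSG : InvariablyGenerates G SG) (hSH : InvariablyGenerates H SH) {Z : Set X}
    (hZ : ∀ x, ∃ z ∈ Z, x ∈ MulAction.orbit H z) :
    InvariablyGenerates (WreathProduct G H X) (inr '' SH ∪ ⋃ z ∈ Z, coordHom G H z '' SG) := by
  intro a
  set C := Subgroup.closure
    ((fun s => (a s)⁻¹ * s * a s) '' (inr '' SH ∪ ⋃ z ∈ Z, coordHom G H z '' SG))
  have hmem : ∀ w ∈ inr '' SH ∪ ⋃ z ∈ Z, coordHom G H z '' SG, (a w)⁻¹ * w * a w ∈ C :=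
    fun w hw => Subgroup.subset_closure ⟨w, hw, rfl⟩
  have hright : C.map rightHom = ⊤ := hSH.eq_top_of_forall_conj_mem fun h hh =>
    ⟨(a (inr h)).right, _, hmem _ (Or.inl ⟨h, hh, rfl⟩), by simp [mul_right, inv_right]⟩
  have hZ_mem : ∀ z ∈ Z, ∀ g, coordHom G H z g ∈ C := by
    intro z hz
    suffices C.comap (coordHom G H z) = ⊤ from (Subgroup.eq_top_iff' _).mp this
    refine hSG.eq_top_of_forall_conj_mem fun s hs => ?_
    have hw := hmem _ (Or.inr (Set.mem_biUnion hz ⟨s, hs, rfl⟩))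
    generalize a (coordHom G H z s) = w at hw
    rw [inv_mul_coordHom_mul] at hw
    obtain ⟨d, hd⟩ := exists_coordHom_smul_mem hright w.right _
    have hz' := hd _ hw
    rw [smul_inv_smul] at hz'
    refine ⟨(w.left : X → G) z * d, Subgroup.mem_comap.mpr ?_⟩
    convert hz' using 2
    group
  refine eq_top_of_coordHom_mem (fun x g => ?_) hright
  obtain ⟨z, hz, h, rfl⟩ := hZ x
  obtain ⟨d, hd⟩ := exists_coordHom_smul_mem hright h z
  simpa [mul_assoc] using hd (d * g * d⁻¹) (hZ_mem z hz _)

theorem isIG_wreathProduct (hG : IsIG G) (hH : IsIG H) : IsIG (WreathProduct G H X) :=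
  (invariablyGenerates_wreathProduct hG hH
    fun x => ⟨x, trivial, MulAction.mem_orbit_self x⟩).mono (Set.subset_univ _)

theorem isFIG_wreathProduct (hG : IsFIG G) (hH : IsFIG H) {Z : Set X} (hZfin : Z.Finite)
    (hZ : ∀ x, ∃ z ∈ Z, x ∈ MulAction.orbit H z) : IsFIG (WreathProduct G H X) := by
  obtain ⟨SG, hSGfin, hSG⟩ := hG
  obtain ⟨SH, hSHfin, hSH⟩ := hH
  exact ⟨_, (hSHfin.image _).union (hZfin.biUnion fun z _ => hSGfin.image _),
    invariablyGenerates_wreathProduct hSG hSH hZ⟩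

theorem isFIG_wreathProduct_iff_fg [Nontrivial G] (hG : IsFIG G) (hH : IsFIG H) :
    IsFIG (WreathProduct G H X) ↔ Group.FG (WreathProduct G H X) := by
  refine ⟨IsFIG.fg, fun hfg => ?_⟩
  obtain ⟨R, hRfin, hR⟩ := exists_finite_orbit_reps_of_fg hfg
  exact isFIG_wreathProduct hG hH hRfin hR

end WreathProduct

section RegularWreath

variable {G H : Type*} [Group G] [Group H]

-- `MulAction.compHom H (MulEquiv.inv' H).toMonoidHom` is the action `h • x = x * h⁻¹`.
lemma regularWreathAut_eq :
    regularWreathAut G H =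
      @wreathAut G H H _ _ (MulAction.compHom H (MulEquiv.inv' H).toMonoidHom) := by
  ext h f x
  simp [regularWreathAut, wreathAut, MulAction.compHom_smul_def]

theorem isFIG_regularWreath (hG : IsFIG G) (hH : IsFIG H) : IsFIG (RegularWreath G H) := by
  let := MulAction.compHom H (MulEquiv.inv' H).toMonoidHom
  change IsFIG (WreathBase G H ⋊[regularWreathAut G H] H)
  rw [regularWreathAut_eq]
  exact isFIG_wreathProduct hG hH (Set.finite_singleton 1) fun x =>
    ⟨1, rfl, x⁻¹, by simp [MulAction.compHom_smul_def]⟩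

end RegularWreath

theorem stmt_14_general (G H X : Type*) [Group G] [Group H] [Nontrivial G]
    [MulAction H X] (hG : IsFIG G) (hH : IsFIG H) :
    IsIG (WreathProduct G H X) ∧
      (IsFIG (WreathProduct G H X) ↔ Group.FG (WreathProduct G H X)) ∧
      IsFIG (RegularWreath G H) :=
  ⟨isIG_wreathProduct hG.isIG hH.isIG, isFIG_wreathProduct_iff_fg hG hH,
    isFIG_regularWreath hG hH⟩

theorem stmt_14 (G H X : Type*) [Group G] [Group H] [Nontrivial G] [Nontrivial H]
    [MulAction H X] [FaithfulSMul H X] (hG : IsFIG G) (hH : IsFIG H) :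
    IsIG (WreathProduct G H X) ∧
      (IsFIG (WreathProduct G H X) ↔ Group.FG (WreathProduct G H X)) ∧
      IsFIG (RegularWreath G H) :=
  stmt_14_general G H X hG hH
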